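/- Let m ≥ 3 and let λ_1,…,λ_m ∈ ℤ² be such that each λ_i is primitive and det(λ_i,λ_{i+1}) ≠ 0 for i = 1,…,m (indices mod m). If κ_1,…,κ_{m−2} is a ℤ-basis of the submodule K ⊆ ℤ^m, then the m vectors a, b, φ(κ_1),…,φ(κ_{m−2}) form a ℤ-basis of the submodule L_1 ∩ ⋯ ∩ L_m of ℤ^m. -/

import Mathlib

/-!
Let `Ψ (α, β, t) = α a + β b + φ t` on `ℤ² × K`; it suffices that `Ψ` is injective with range
`⋂ L_i`. A vector `x` lies in `L_i` iff `(x_i, x_{i+1}) = s (a_i, a_{i+1}) + r (b_i, b_{i+1})`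
for some `s, r`. With the partial sums `P_i = ∑_{j ≤ i} t_j λ_j` one has
`(φ t)_k = det (P_i, λ_k)` for `k = i, i + 1` (when `i < m`), and `P_m = 0` for `t ∈ K`.
So `φ t ∈ L_i`, and `φ t = 0` forces every `P_i` to vanish since `det (λ_i, λ_{i+1}) ≠ 0`,
whence `t = 0`. Conversely, for `x ∈ ⋂ L_i` the coefficient pairs of `L_{i-1}` and `L_i` both
describe `x_i`, so by primitivity of `λ_i` they differ by `t_i (-b_i, a_i)`; the differences
telescope around the cycle, so `t ∈ K`, and summing them exhibits `x` as `Ψ (s, r, t)` with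
`(s, r)` the coefficients of `L_m`.
-/

namespace ToricStmt

/-- Cyclic successor on `Fin m` (indices mod `m`). -/
def fsucc {m : ℕ} (i : Fin m) : Fin m := ⟨(i.val + 1) % m, Nat.mod_lt _ i.pos⟩

/-- The submodule `K` of linear relations among the `λ_i = (a_i, b_i)`. -/
def Kmod (m : ℕ) (a b : Fin m → ℤ) : Submodule ℤ (Fin m → ℤ) where
  carrier := {t | ∑ i, t i * a i = 0 ∧ ∑ i, t i * b i = 0}
  add_mem' := by
    intro x y hx hy
    obtain ⟨hx1, hx2⟩ := hx
    obtain ⟨hy1, hy2⟩ := hy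
    constructor
    · simp only [Pi.add_apply, add_mul]
      rw [Finset.sum_add_distrib, hx1, hy1, add_zero]
    · simp only [Pi.add_apply, add_mul]
      rw [Finset.sum_add_distrib, hx2, hy2, add_zero]
  zero_mem' := by constructor <;> simp
  smul_mem' := by
    intro c x hx
    obtain ⟨hx1, hx2⟩ := hx
    constructor
    · simp only [Pi.smul_apply, smul_eq_mul, mul_assoc]
      rw [← Finset.mul_sum, hx1, mul_zero]
    · simp only [Pi.smul_apply, smul_eq_mul, mul_assoc]
      rw [← Finset.mul_sum, hx2, mul_zero]

/-- The linear map `φ : ℤ^m → ℤ^m`, with `(φ t)_i = ∑_{j<i} (a_j b_i - a_i b_j) t_j`. -/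
def phi (m : ℕ) (a b : Fin m → ℤ) : (Fin m → ℤ) →ₗ[ℤ] (Fin m → ℤ) where
  toFun t := fun i => ∑ j ∈ Finset.univ.filter (fun j => j < i), (a j * b i - a i * b j) * t j
  map_add' x y := by
    funext i
    simp only [Pi.add_apply, mul_add]
    exact Finset.sum_add_distrib
  map_smul' c x := by
    funext i
    simp only [Pi.smul_apply, smul_eq_mul, RingHom.id_apply]
    rw [Finset.mul_sum]
    exact Finset.sum_congr rfl fun j _ => by ring

/-- The lattice `L_i`: the span of the `e_j` for `j ∉ {i, i+1}` together with
`a_i e_i + a_{i+1} e_{i+1}` and `b_i e_i + b_{i+1} e_{i+1}` (indices mod `m`). -/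
def Lmod (m : ℕ) (a b : Fin m → ℤ) (i : Fin m) : Submodule ℤ (Fin m → ℤ) :=
  Submodule.span ℤ
    ((fun j : Fin m => (Pi.single j 1 : Fin m → ℤ)) '' {j : Fin m | j ≠ i ∧ j ≠ fsucc i} ∪
      {a i • (Pi.single i 1 : Fin m → ℤ) + a (fsucc i) • (Pi.single (fsucc i) 1 : Fin m → ℤ),
       b i • (Pi.single i 1 : Fin m → ℤ) + b (fsucc i) • (Pi.single (fsucc i) 1 : Fin m → ℤ)})

end ToricStmt

open Finset

lemma eq_zero_of_det_ne_zero {R : Type*} [CommRing R] [NoZeroDivisors R] {p q r s x y : R}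
    (hdet : p * s - q * r ≠ 0) (h₁ : p * x + q * y = 0) (h₂ : r * x + s * y = 0) :
    x = 0 ∧ y = 0 :=
  ⟨(mul_eq_zero.1 (by linear_combination s * h₁ - q * h₂ : (p * s - q * r) * x = 0)).resolve_left
      hdet,
    (mul_eq_zero.1 (by linear_combination p * h₂ - r * h₁ : (p * s - q * r) * y = 0)).resolve_left
      hdet⟩

lemma IsCoprime.exists_of_mul_add_mul_eq_zero {R : Type*} [CommRing R] {p q x y : R}
    (h : IsCoprime p q) (hxy : p * x + q * y = 0) : ∃ τ, y = p * τ ∧ x = -(q * τ) := by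
  obtain ⟨u, v, huv⟩ := h
  exact ⟨u * y - v * x, by linear_combination (-y) * huv + v * hxy,
    by linear_combination (-x) * huv + u * hxy⟩

lemma Fin.eq_add_sum_Iic_of_sub_eq {M : Type*} [AddCommGroup M] {n : ℕ} {f g : Fin (n + 1) → M}
    (h : ∀ j, f j - f (j - 1) = g j) (i : Fin (n + 1)) : f i = f (-1) + ∑ j ∈ Iic i, g j := by
  induction i using Fin.induction with
  | zero =>
    rw [show Iic (0 : Fin (n + 1)) = {0} by ext; simp, sum_singleton, ← h, zero_sub]
    abel
  | succ k ih =>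
    rw [← Fin.coeSucc_eq_succ] at *
    rw [Iic_eq_cons_Iio, Finset.sum_cons, Fin.Iio_add_one_eq_Iic (by simp), ← h,
      add_sub_cancel_right, ih]
    abel

namespace ToricStmt

section
variable {m : ℕ} (a b : Fin m → ℤ)

lemma phi_apply_eq_sum_Iio (t : Fin m → ℤ) (i : Fin m) :
    phi m a b t i = b i * ∑ j ∈ Iio i, a j * t j - a i * ∑ j ∈ Iio i, b j * t j := by
  simp only [phi, LinearMap.coe_mk, AddHom.coe_mk, filter_gt_eq_Iio, mul_sum, ← sum_sub_distrib]
  exact sum_congr rfl fun j _ => by ring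

lemma phi_apply_eq_sum_Iic (t : Fin m → ℤ) (i : Fin m) :
    phi m a b t i = b i * ∑ j ∈ Iic i, a j * t j - a i * ∑ j ∈ Iic i, b j * t j := by
  rw [phi_apply_eq_sum_Iio, Iic_eq_cons_Iio, sum_cons, sum_cons]
  ring

lemma mem_Lmod_iff {i : Fin m} (hi : fsucc i ≠ i) (x : Fin m → ℤ) :
    x ∈ Lmod m a b i ↔ ∃ s r : ℤ,
      x i = s * a i + r * b i ∧ x (fsucc i) = s * a (fsucc i) + r * b (fsucc i) := by
  constructor
  · intro hx
    induction hx using Submodule.span_induction with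
    | mem v hv =>
      rcases hv with ⟨j, ⟨hji, hjs⟩, rfl⟩ | hv
      · exact ⟨0, 0, by simp [Ne.symm hji, Ne.symm hjs]⟩
      · rcases hv with rfl | rfl
        · exact ⟨1, 0, by simp [hi, Ne.symm hi]⟩
        · exact ⟨0, 1, by simp [hi, Ne.symm hi]⟩
    | zero => exact ⟨0, 0, by simp⟩
    | add v w _ _ hv hw =>
      obtain ⟨s, r, hvi, hvs⟩ := hv
      obtain ⟨s', r', hwi, hws⟩ := hw
      exact ⟨s + s', r + r', by simp only [Pi.add_apply, hvi, hvs, hwi, hws]; constructor <;> ring⟩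
    | smul c v _ hv =>
      obtain ⟨s, r, hvi, hvs⟩ := hv
      exact ⟨c * s, c * r,
        by simp only [Pi.smul_apply, smul_eq_mul, hvi, hvs]; constructor <;> ring⟩
  · rintro ⟨s, r, hxi, hxs⟩
    set va := a i • (Pi.single i 1 : Fin m → ℤ) + a (fsucc i) • Pi.single (fsucc i) 1
    set vb := b i • (Pi.single i 1 : Fin m → ℤ) + b (fsucc i) • Pi.single (fsucc i) 1
    have hva : va ∈ Lmod m a b i := Submodule.subset_span (Or.inr (Set.mem_insert _ _))
    have hvb : vb ∈ Lmod m a b i := Submodule.subset_span (Or.inr (Set.mem_insert_of_mem _ rfl))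
    have hy : x - s • va - r • vb ∈ Lmod m a b i := by
      rw [← univ_sum_single (x - s • va - r • vb)]
      refine Submodule.sum_mem _ fun j _ => ?_
      by_cases hj : j = i ∨ j = fsucc i
      · rcases hj with rfl | rfl <;> simp [va, vb, hxi, hxs, hi, Ne.symm hi]
      · push Not at hj
        rw [← mul_one ((x - s • va - r • vb) j), ← smul_eq_mul, Pi.single_smul]
        exact Submodule.smul_mem _ _ (Submodule.subset_span (Or.inl ⟨j, hj, rfl⟩))
    convert add_mem (add_mem hy (Submodule.smul_mem _ s hva)) (Submodule.smul_mem _ r hvb) using 1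
    abel

def extendedPhi : (ℤ × ℤ) × Kmod m a b →ₗ[ℤ] (Fin m → ℤ) :=
  ((LinearMap.toSpanSingleton ℤ _ a).coprod (LinearMap.toSpanSingleton ℤ _ b)).coprod
    ((phi m a b).comp (Kmod m a b).subtype)

@[simp]
lemma extendedPhi_apply (α β : ℤ) (t : Kmod m a b) :
    extendedPhi a b ((α, β), t) = α • a + β • b + phi m a b t :=
  rfl

end

section
variable {n : ℕ} (a b : Fin (n + 1) → ℤ)

lemma fsucc_eq_add_one (i : Fin (n + 1)) : fsucc i = i + 1 :=
  Fin.ext (by simp [fsucc, Fin.val_add])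

lemma mem_iInf_Lmod_iff (hn : n ≠ 0) (x : Fin (n + 1) → ℤ) :
    x ∈ ⨅ i, Lmod (n + 1) a b i ↔ ∀ i, ∃ s r : ℤ,
      x i = s * a i + r * b i ∧ x (i + 1) = s * a (i + 1) + r * b (i + 1) := by
  have hne : ∀ i : Fin (n + 1), fsucc i ≠ i := fun i => by
    rw [fsucc_eq_add_one, Ne, add_eq_left, Fin.one_eq_zero_iff]
    omega
  simp only [Submodule.mem_iInf, mem_Lmod_iff a b (hne _), fsucc_eq_add_one]

lemma phi_apply_zero (t : Fin (n + 1) → ℤ) : phi (n + 1) a b t 0 = 0 := by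
  rw [phi_apply_eq_sum_Iio, show Iio (0 : Fin (n + 1)) = ∅ by ext; simp]
  simp

lemma phi_apply_last {t : Fin (n + 1) → ℤ} (ht : t ∈ Kmod (n + 1) a b) :
    phi (n + 1) a b t (Fin.last n) = 0 := by
  obtain ⟨hta, htb⟩ := ht
  simp_rw [phi_apply_eq_sum_Iic, ← Fin.top_eq_last, Iic_top, mul_comm (a _), mul_comm (b _), hta,
    htb]
  ring

lemma phi_apply_add_one (t : Fin (n + 1) → ℤ) {i : Fin (n + 1)} (hi : i ≠ Fin.last n) :
    phi (n + 1) a b t (i + 1) =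
      b (i + 1) * ∑ j ∈ Iic i, a j * t j - a (i + 1) * ∑ j ∈ Iic i, b j * t j := by
  rw [phi_apply_eq_sum_Iio, Fin.Iio_add_one_eq_Iic (by have := Fin.val_lt_last hi; omega)]

lemma phi_mem_iInf_Lmod (hn : n ≠ 0) {t : Fin (n + 1) → ℤ} (ht : t ∈ Kmod (n + 1) a b) :
    phi (n + 1) a b t ∈ ⨅ i, Lmod (n + 1) a b i := by
  refine (mem_iInf_Lmod_iff a b hn _).2 fun i => ?_
  by_cases hi : i = Fin.last n
  · subst hi
    exact ⟨0, 0, by simp [phi_apply_last a b ht, Fin.last_add_one, phi_apply_zero]⟩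
  · refine ⟨-∑ j ∈ Iic i, b j * t j, ∑ j ∈ Iic i, a j * t j, ?_, ?_⟩
    · rw [phi_apply_eq_sum_Iic]; ring
    · rw [phi_apply_add_one a b t hi]; ring

variable {a b} in
lemma eq_zero_of_phi_eq_zero (hdet : ∀ i, a i * b (i + 1) - a (i + 1) * b i ≠ 0)
    {t : Fin (n + 1) → ℤ} (ht : t ∈ Kmod (n + 1) a b) (h0 : phi (n + 1) a b t = 0) : t = 0 := by
  have hIic : ∀ i, ∑ j ∈ Iic i, a j * t j = 0 ∧ ∑ j ∈ Iic i, b j * t j = 0 := by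
    intro i
    by_cases hi : i = Fin.last n
    · obtain ⟨hta, htb⟩ := ht
      simp_rw [hi, ← Fin.top_eq_last, Iic_top, mul_comm (a _), mul_comm (b _)]
      exact ⟨hta, htb⟩
    · have h₁ := congrFun h0 i
      have h₂ := congrFun h0 (i + 1)
      rw [Pi.zero_apply, phi_apply_eq_sum_Iic] at h₁
      rw [Pi.zero_apply, phi_apply_add_one a b t hi] at h₂
      exact eq_zero_of_det_ne_zero (p := b i) (q := -a i) (r := b (i + 1)) (s := -a (i + 1))
        (fun h => hdet i (by linear_combination h))
        (by linear_combination h₁) (by linear_combination h₂)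
  have hIio : ∀ i, ∑ j ∈ Iio i, a j * t j = 0 ∧ ∑ j ∈ Iio i, b j * t j = 0 := by
    intro i
    rcases eq_or_ne i 0 with rfl | hi
    · simp [show Iio (0 : Fin (n + 1)) = ∅ by ext; simp]
    · rw [← Fin.Iic_sub_one_eq_Iio (Fin.pos_iff_ne_zero.2 hi)]
      exact hIic _
  funext i
  obtain ⟨ha, hb⟩ := hIic i
  obtain ⟨ha', hb'⟩ := hIio i
  rw [Iic_eq_cons_Iio, sum_cons, ha', add_zero] at ha
  rw [Iic_eq_cons_Iio, sum_cons, hb', add_zero] at hb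
  by_contra hti
  exact hdet i
    (by simp [(mul_eq_zero.1 ha).resolve_right hti, (mul_eq_zero.1 hb).resolve_right hti])

variable {a b} in
lemma injective_extendedPhi (hdet : ∀ i, a i * b (i + 1) - a (i + 1) * b i ≠ 0) :
    Function.Injective (extendedPhi a b) := by
  refine (injective_iff_map_eq_zero _).2 fun ⟨⟨α, β⟩, t⟩ h => ?_
  rw [extendedPhi_apply] at h
  have h₀ := congrFun h 0
  have hL := congrFun h (Fin.last n)
  simp only [Pi.add_apply, Pi.smul_apply, smul_eq_mul, Pi.zero_apply, phi_apply_zero,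
    phi_apply_last a b t.2, add_zero] at h₀ hL
  have hdetL := hdet (Fin.last n)
  rw [Fin.last_add_one] at hdetL
  obtain ⟨rfl, rfl⟩ := eq_zero_of_det_ne_zero (p := a (Fin.last n)) (q := b (Fin.last n))
    (r := a 0) (s := b 0) (x := α) (y := β) (fun h => hdetL (by linear_combination h))
    (by linear_combination hL) (by linear_combination h₀)
  have ht : t = 0 := Subtype.ext (eq_zero_of_phi_eq_zero hdet t.2 (by simpa using h))
  simp [ht]

variable {a b} in
lemma mem_range_extendedPhi (hcop : ∀ i, IsCoprime (a i) (b i)) {x : Fin (n + 1) → ℤ}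
    (hx : ∀ i, ∃ s r : ℤ, x i = s * a i + r * b i ∧ x (i + 1) = s * a (i + 1) + r * b (i + 1)) :
    x ∈ LinearMap.range (extendedPhi a b) := by
  choose s r hs using hx
  have hstep : ∀ j, ∃ τ, r j - r (j - 1) = a j * τ ∧ s j - s (j - 1) = -(b j * τ) := fun j =>
    IsCoprime.exists_of_mul_add_mul_eq_zero (hcop j) <| by
      have h := (hs (j - 1)).2
      rw [sub_add_cancel] at h
      linear_combination h - (hs j).1
  choose t ht using hstep
  have htK : t ∈ Kmod (n + 1) a b := by
    constructor
    · calc ∑ j, t j * a j = ∑ j, (r j - r (j - 1)) :=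
            sum_congr rfl fun j _ => by rw [(ht j).1, mul_comm]
        _ = 0 := by rw [sum_sub_distrib, sub_eq_zero]; exact ((Equiv.subRight 1).sum_comp r).symm
    · calc ∑ j, t j * b j = ∑ j, (s (j - 1) - s j) :=
            sum_congr rfl fun j _ => by linear_combination (ht j).2
        _ = 0 := by rw [sum_sub_distrib, sub_eq_zero]; exact (Equiv.subRight 1).sum_comp s
  have hr := Fin.eq_add_sum_Iic_of_sub_eq fun j => (ht j).1
  have hs' := Fin.eq_add_sum_Iic_of_sub_eq fun j => (ht j).2
  refine ⟨((s (-1), r (-1)), ⟨t, htK⟩), funext fun i => ?_⟩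
  simp only [extendedPhi_apply, Pi.add_apply, Pi.smul_apply, smul_eq_mul, phi_apply_eq_sum_Iic]
  rw [(hs i).1, hr i, hs' i, sum_neg_distrib]
  ring

lemma range_extendedPhi (hn : n ≠ 0) (hcop : ∀ i, IsCoprime (a i) (b i)) :
    LinearMap.range (extendedPhi a b) = ⨅ i, Lmod (n + 1) a b i := by
  refine le_antisymm ?_ fun x hx => mem_range_extendedPhi hcop ((mem_iInf_Lmod_iff a b hn x).1 hx)
  rintro _ ⟨⟨⟨α, β⟩, t⟩, rfl⟩
  have ha : a ∈ ⨅ i, Lmod (n + 1) a b i :=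
    (mem_iInf_Lmod_iff a b hn a).2 fun i => ⟨1, 0, by simp, by simp⟩
  have hb : b ∈ ⨅ i, Lmod (n + 1) a b i :=
    (mem_iInf_Lmod_iff a b hn b).2 fun i => ⟨0, 1, by simp, by simp⟩
  rw [extendedPhi_apply]
  exact add_mem (add_mem (Submodule.smul_mem _ α ha) (Submodule.smul_mem _ β hb))
    (phi_mem_iInf_Lmod a b hn t.2)

end

/-- If `κ_1, …, κ_{m-2}` is a `ℤ`-basis of `K`, then
`a, b, φ(κ_1), …, φ(κ_{m-2})` form a `ℤ`-basis of `L_1 ∩ ⋯ ∩ L_m`. -/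
theorem stmt1 (m : ℕ) (hm : 3 ≤ m) (a b : Fin m → ℤ)
    (hprim : ∀ i, Int.gcd (a i) (b i) = 1)
    (hdet : ∀ i : Fin m, a i * b (fsucc i) - a (fsucc i) * b i ≠ 0)
    (κ : Module.Basis (Fin (m - 2)) ℤ ↥(Kmod m a b)) :
    ∃ B : Module.Basis (Fin m) ℤ ↥(⨅ i, Lmod m a b i),
      ((B ⟨0, by omega⟩ : Fin m → ℤ) = a) ∧
      ((B ⟨1, by omega⟩ : Fin m → ℤ) = b) ∧
      ∀ j : Fin (m - 2),
        (B ⟨(j : ℕ) + 2, by have := j.isLt; omega⟩ : Fin m → ℤ) =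
          phi m a b (κ j : Fin m → ℤ) := by
  obtain ⟨n, rfl⟩ : ∃ n, m = n + 1 := ⟨m - 1, by omega⟩
  simp only [fsucc_eq_add_one] at hdet
  have hcop : ∀ i, IsCoprime (a i) (b i) := fun i => Int.isCoprime_iff_gcd_eq_one.2 (hprim i)
  let Ψ := (LinearEquiv.ofInjective _ (injective_extendedPhi hdet)).trans
    (LinearEquiv.ofEq _ _ (range_extendedPhi a b (by omega) hcop))
  let e : Fin 2 ⊕ Fin (n + 1 - 2) ≃ Fin (n + 1) := finSumFinEquiv.trans (finCongr (by omega))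
  refine ⟨(((Module.Basis.finTwoProd ℤ).prod κ).map Ψ).reindex e, ?_, ?_, fun j => ?_⟩
  · have : e.symm ⟨0, by omega⟩ = Sum.inl 0 := e.symm_apply_eq.2 (Fin.ext rfl)
    rw [Module.Basis.reindex_apply, this]
    simp [Ψ, ← Prod.mk_zero_zero]
  · have : e.symm ⟨1, by omega⟩ = Sum.inl 1 := e.symm_apply_eq.2 (Fin.ext rfl)
    rw [Module.Basis.reindex_apply, this]
    simp [Ψ, ← Prod.mk_zero_zero]
  · have : e.symm ⟨j + 2, by omega⟩ = Sum.inr j :=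
      e.symm_apply_eq.2 (Fin.ext (by simp [e]; omega))
    rw [Module.Basis.reindex_apply, this]
    simp [Ψ, ← Prod.mk_zero_zero]

end ToricStmt
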